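/- In the Schläfli incidence structure on 27 lines, the maximum size of a set of pairwise non-intersecting lines is 6: the set {a₁,…,a₆} is pairwise disjoint, and no set of 7 lines among the 27 is pairwise disjoint. -/

import Mathlib

/-- The 27 lines on a smooth cubic surface, labelled à la Schläfli:
six lines `a i`, six lines `b i`, and fifteen lines `c {i,j}` for i < j. -/
inductive L27 where
  | a : Fin 6 → L27
  | b : Fin 6 → L27
  | c : {p : Fin 6 × Fin 6 // p.1 < p.2} → L27
  deriving DecidableEq

/-- The Schläfli incidence relation on the 27 lines. -/
def meets : L27 → L27 → Prop
  | L27.a _, L27.a _ => False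
  | L27.a i, L27.b j => i ≠ j
  | L27.a i, L27.c p => i = p.1.1 ∨ i = p.1.2
  | L27.b i, L27.a j => i ≠ j
  | L27.b _, L27.b _ => False
  | L27.b i, L27.c p => i = p.1.1 ∨ i = p.1.2
  | L27.c p, L27.a j => j = p.1.1 ∨ j = p.1.2
  | L27.c p, L27.b j => j = p.1.1 ∨ j = p.1.2
  | L27.c p, L27.c q => p.1.1 ≠ q.1.1 ∧ p.1.1 ≠ q.1.2 ∧ p.1.2 ≠ q.1.1 ∧ p.1.2 ≠ q.1.2

/-!
Split a pairwise disjoint set `S` into its lines `aᵢ` (`i ∈ A`), `bⱼ` (`j ∈ B`) and `c_{kl}`.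
Since `aᵢ` and `bⱼ` are disjoint only for `i = j`, either `A = B = {i}` or one of `A`, `B` is
empty. Two lines `c_{kl}` are disjoint exactly when their index pairs meet, and `c_{kl}` is disjoint
from `aᵢ`, `bᵢ` only if `i ∉ {k, l}`; so the pairs form an intersecting family of 2-subsets of the
complement `U` of `A ∪ B`. By Erdős–Ko–Rado it has at most `#U - 1` members when `#U ≥ 4`, and
trivially at most `#U` otherwise. This gives `#S ≤ 1 + 1 + 4` in the first case and
`#S ≤ #(A ∪ B) + #U = 6` in the second.
-/

open Finset

/-- Erdős–Ko–Rado over an arbitrary finite ground set `U`, transported from Mathlib's version over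
`Fin n` along an enumeration of `U`. -/
theorem Finset.card_le_choose_of_intersecting_of_subset_powersetCard {α : Type*} [DecidableEq α]
    {U : Finset α} {𝒜 : Finset (Finset α)} {r : ℕ} (h𝒜 : (𝒜 : Set (Finset α)).Intersecting)
    (h𝒜U : 𝒜 ⊆ U.powersetCard r) (hr : r ≤ #U / 2) :
    #𝒜 ≤ (#U - 1).choose (r - 1) := by
  let e : Fin #U ↪ α := U.equivFin.symm.toEmbedding.trans (.subtype _)
  have he : univ.map e = U := by
    rw [← map_map, map_univ_equiv, univ_eq_attach, attach_map_val]
  let ℬ := univ.filter fun t : Finset (Fin #U) => t.map e ∈ 𝒜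
  have hℬ : ℬ.map (mapEmbedding e).toEmbedding = 𝒜 := by
    ext s
    simp only [mem_map, mem_filter, mem_univ, true_and, RelEmbedding.coe_toEmbedding,
      mapEmbedding_apply, ℬ]
    refine ⟨fun ⟨t, ht, hts⟩ => hts ▸ ht, fun hs => ?_⟩
    have hsU : s ⊆ univ.map e := he.symm ▸ (mem_powersetCard.1 (h𝒜U hs)).1
    obtain ⟨t, -, rfl⟩ := subset_map_iff.1 hsU
    exact ⟨t, hs, rfl⟩
  rw [← hℬ, card_map]
  refine erdos_ko_rado (fun t ht t' ht' hdisj => ?_) (fun t ht => ?_) hr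
  · exact h𝒜 (mem_filter.1 ht).2 (mem_filter.1 ht').2 ((disjoint_map e).2 hdisj)
  · rw [← card_map e]
    exact (mem_powersetCard.1 (h𝒜U (mem_filter.1 ht).2)).2

theorem Finset.card_lt_of_intersecting_of_subset_powersetCard_two {α : Type*} [DecidableEq α]
    {U : Finset α} {𝒜 : Finset (Finset α)} (h𝒜 : (𝒜 : Set (Finset α)).Intersecting)
    (h𝒜U : 𝒜 ⊆ U.powersetCard 2) (hU : 4 ≤ #U) : #𝒜 < #U := by
  have := card_le_choose_of_intersecting_of_subset_powersetCard h𝒜 h𝒜U (by omega)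
  rw [Nat.choose_one_right] at this
  omega

theorem Finset.card_le_of_intersecting_of_subset_powersetCard_two {α : Type*} [DecidableEq α]
    {U : Finset α} {𝒜 : Finset (Finset α)} (h𝒜 : (𝒜 : Set (Finset α)).Intersecting)
    (h𝒜U : 𝒜 ⊆ U.powersetCard 2) : #𝒜 ≤ #U := by
  rcases le_or_gt 4 #U with hU | hU
  · exact (card_lt_of_intersecting_of_subset_powersetCard_two h𝒜 h𝒜U hU).le
  · calc #𝒜 ≤ #(U.powersetCard 2) := card_le_card h𝒜U
      _ = (#U).choose 2 := card_powersetCard 2 U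
      _ ≤ #U := by interval_cases #U <;> decide

namespace L27

def pairSet (p : {p : Fin 6 × Fin 6 // p.1 < p.2}) : Finset (Fin 6) := {p.1.1, p.1.2}

theorem pairSet_injective : Function.Injective pairSet := by
  unfold Function.Injective; decide

theorem card_pairSet (p : {p : Fin 6 × Fin 6 // p.1 < p.2}) : #(pairSet p) = 2 :=
  card_pair p.2.ne

theorem meets_a_c_iff {i : Fin 6} {p : {p : Fin 6 × Fin 6 // p.1 < p.2}} :
    meets (a i) (c p) ↔ i ∈ pairSet p := by
  simp [meets, pairSet]

theorem meets_b_c_iff {i : Fin 6} {p : {p : Fin 6 × Fin 6 // p.1 < p.2}} :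
    meets (b i) (c p) ↔ i ∈ pairSet p := by
  simp [meets, pairSet]

theorem meets_c_c_iff {p q : {p : Fin 6 × Fin 6 // p.1 < p.2}} :
    meets (c p) (c q) ↔ Disjoint (pairSet p) (pairSet q) := by
  simp only [meets, pairSet, disjoint_insert_left, disjoint_insert_right, disjoint_singleton,
    mem_insert, mem_singleton]
  grind

section DisjointFamily

variable (S : Finset L27)

def aIndices : Finset (Fin 6) := univ.filter (a · ∈ S)

def bIndices : Finset (Fin 6) := univ.filter (b · ∈ S)

def cIndices : Finset {p : Fin 6 × Fin 6 // p.1 < p.2} := univ.filter (c · ∈ S)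

theorem card_le_card_aIndices_add_card_bIndices_add_card_cIndices :
    #S ≤ #(aIndices S) + #(bIndices S) + #(cIndices S) := by
  have hS : S ⊆ ((aIndices S).image a ∪ (bIndices S).image b) ∪
      (cIndices S).image c := by
    intro l hl
    cases l <;> simp [aIndices, bIndices, cIndices, hl]
  calc #S ≤ _ := card_le_card hS
    _ ≤ #((aIndices S).image a) + #((bIndices S).image b) +
        #((cIndices S).image c) :=
      (card_union_le _ _).trans (Nat.add_le_add_right (card_union_le _ _) _)
    _ ≤ _ := by gcongr <;> exact card_image_le

variable {S}

theorem exists_aIndices_eq_bIndices_singleton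
    (hS : (S : Set L27).Pairwise fun l m => ¬ meets l m) (hA : (aIndices S).Nonempty)
    (hB : (bIndices S).Nonempty) : ∃ i, aIndices S = {i} ∧ bIndices S = {i} := by
  have hab : ∀ i ∈ aIndices S, ∀ j ∈ bIndices S, i = j := fun i hi j hj => by
    simp only [aIndices, bIndices, mem_filter, mem_univ, true_and] at hi hj
    simpa [meets] using hS hi hj (by simp)
  obtain ⟨i, hi⟩ := hA
  obtain ⟨j, hj⟩ := hB
  obtain rfl := hab i hi j hj
  exact ⟨i, eq_singleton_iff_unique_mem.2 ⟨hi, fun k hk => hab k hk i hj⟩,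
    eq_singleton_iff_unique_mem.2 ⟨hj, fun k hk => (hab i hi k hk).symm⟩⟩

theorem intersecting_image_pairSet_cIndices (hS : (S : Set L27).Pairwise fun l m => ¬ meets l m) :
    ((cIndices S).image pairSet : Set (Finset (Fin 6))).Intersecting := by
  simp only [coe_image, Set.Intersecting, Set.mem_image, mem_coe, cIndices, mem_filter,
    mem_univ, true_and]
  rintro _ ⟨p, hp, rfl⟩ _ ⟨q, hq, rfl⟩
  obtain rfl | hpq := eq_or_ne p q
  · simp [← card_eq_zero, card_pairSet]
  · exact meets_c_c_iff.not.1 (hS hp hq (by simpa using hpq))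

theorem image_pairSet_cIndices_subset_powersetCard
    (hS : (S : Set L27).Pairwise fun l m => ¬ meets l m) :
    (cIndices S).image pairSet ⊆ (aIndices S ∪ bIndices S)ᶜ.powersetCard 2 := by
  simp only [subset_iff, mem_image, mem_powersetCard, cIndices, mem_filter, mem_univ, true_and]
  rintro _ ⟨p, hp, rfl⟩
  refine ⟨fun i hi => ?_, card_pairSet p⟩
  simp only [mem_compl, mem_union, aIndices, bIndices, mem_filter, mem_univ, true_and, not_or]
  exact ⟨fun ha => hS ha hp (by simp) (meets_a_c_iff.2 hi),
    fun hb => hS hb hp (by simp) (meets_b_c_iff.2 hi)⟩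

end DisjointFamily

end L27

open L27

/-- In the Schläfli incidence structure, the maximum size of a set of pairwise
non-intersecting lines is 6: the aᵢ are pairwise disjoint, and no 7 of the 27 lines are
pairwise disjoint. -/
theorem max_disjoint_lines_is_six :
    (∀ i j : Fin 6, ¬ meets (L27.a i) (L27.a j)) ∧
      ∀ S : Finset L27, (∀ l ∈ S, ∀ m ∈ S, l ≠ m → ¬ meets l m) → S.card ≤ 6 := by
  refine ⟨fun _ _ h => h, fun S hS => ?_⟩
  have hS' : (S : Set L27).Pairwise fun l m => ¬ meets l m := fun l hl m hm => hS l hl m hm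
  have hcard := card_le_card_aIndices_add_card_bIndices_add_card_cIndices S
  have h𝒜 := intersecting_image_pairSet_cIndices hS'
  have h𝒜U := image_pairSet_cIndices_subset_powersetCard hS'
  rw [← card_image_of_injective _ pairSet_injective] at hcard
  by_cases hAB : (aIndices S).Nonempty ∧ (bIndices S).Nonempty
  · obtain ⟨i, hA, hB⟩ := exists_aIndices_eq_bIndices_singleton hS' hAB.1 hAB.2
    rw [hA, hB, union_self] at h𝒜U
    have hC := card_lt_of_intersecting_of_subset_powersetCard_two h𝒜 h𝒜U (by simp [card_compl])
    simp only [hA, hB, card_singleton, card_compl, Fintype.card_fin] at hcard hC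
    omega
  · have hdisj : Disjoint (aIndices S) (bIndices S) := by
      rw [not_and_or, not_nonempty_iff_eq_empty, not_nonempty_iff_eq_empty] at hAB
      rcases hAB with h | h <;> simp [h]
    have hC := card_le_of_intersecting_of_subset_powersetCard_two h𝒜 h𝒜U
    have hU := card_compl_add_card (aIndices S ∪ bIndices S)
    rw [card_union_of_disjoint hdisj, Fintype.card_fin] at hU
    omega
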